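/- Let (G,∘) be a cyclic group of order 2ᵐ for some m ≥ 1. Then for every group operation · on G such that (G,·,∘) is a skew brace, every subgroup of (G,∘) is a left ideal of (G,·,∘). -/

import Mathlib

/-!
The maps `γ(σ)` are automorphisms of `(G,·)` and `σ ↦ γ(σ)` is a homomorphism from `(G,∘)`, so
the 2-group `(G,∘)` acts on the 2-group `(G,·)`; counting fixed points gives an involution `w`,
central in `(G,·)` and fixed by every `γ(σ)`. Then `x · w = x ∘ w` for all `x`, so `w` is also the
unique involution of the cyclic group `(G,∘)` and lies in every nontrivial subgroup `H` of it.
Moreover `N = {1, w}` has the same cosets in both groups, so `G/N` is a skew brace whose circle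
group is cyclic of order `2^(m-1)`. By induction the image of `H` in `G/N` is a left ideal, and
since `N ⊆ H`, `H` is the preimage of that image, hence a left ideal.
-/

def IsSkewBrace {G : Type*} (dot circ : Group G) : Prop :=
  ∀ σ τ κ : G,
    circ.mul σ (dot.mul τ κ) =
      dot.mul (dot.mul (circ.mul σ τ) (dot.inv σ)) (circ.mul σ κ)

def gammaFun {G : Type*} (dot circ : Group G) (σ τ : G) : G :=
  dot.mul (dot.inv σ) (circ.mul σ τ)

def IsSubgroupOf {G : Type*} (S : Group G) (H : Set G) : Prop :=
  S.one ∈ H ∧ (∀ a ∈ H, ∀ b ∈ H, S.mul a b ∈ H) ∧ (∀ a ∈ H, S.inv a ∈ H)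

def IsLeftIdeal {G : Type*} (dot circ : Group G) (H : Set G) : Prop :=
  IsSubgroupOf dot H ∧ ∀ σ : G, ∀ τ ∈ H, gammaFun dot circ σ τ ∈ H

def IsStrongLeftIdeal {G : Type*} (dot circ : Group G) (H : Set G) : Prop :=
  IsLeftIdeal dot circ H ∧
    ∀ σ : G, ∀ τ ∈ H, dot.mul (dot.mul σ τ) (dot.inv σ) ∈ H

def IsCharacteristicSubgroupOf {G : Type*} (S : Group G) (H : Set G) : Prop :=
  IsSubgroupOf S H ∧
    ∀ f : G ≃ G, (∀ a b : G, f (S.mul a b) = S.mul (f a) (f b)) → ∀ a ∈ H, f a ∈ H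

def oppGroup {G : Type*} (dot : Group G) : Group G :=
  letI := dot
  { mul := fun a b => b * a
    one := (1 : G)
    inv := fun a => a⁻¹
    npow := @npowRec G ⟨(1 : G)⟩ ⟨fun a b => b * a⟩
    npow_zero := fun _ => rfl
    npow_succ := fun _ _ => rfl
    zpow := @zpowRec G ⟨(1 : G)⟩ ⟨fun a b => b * a⟩ ⟨fun a => a⁻¹⟩
      (@npowRec G ⟨(1 : G)⟩ ⟨fun a b => b * a⟩)
    zpow_zero' := fun _ => rfl
    zpow_succ' := fun _ _ => rfl
    zpow_neg' := fun _ _ => rfl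
    div := fun a b => b⁻¹ * a
    div_eq_mul_inv := fun _ _ => rfl
    mul_assoc := fun a b c => (mul_assoc c b a).symm
    one_mul := fun a => mul_one a
    mul_one := fun a => one_mul a
    inv_mul_cancel := fun a => mul_inv_cancel a }

def lam {G : Type*} (S : Group G) (σ : G) : Equiv.Perm G :=
  letI := S; Equiv.mulLeft σ

def rho {G : Type*} (S : Group G) (σ : G) : Equiv.Perm G :=
  letI := S; Equiv.mulRight σ⁻¹

theorem IsPGroup.exists_mem_center_orderOf_eq_forall_apply_eq {p : ℕ} [Fact p.Prime]
    {G : Type*} [Group G] [Finite G] [Nontrivial G] (hG : IsPGroup p G)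
    {P : Type*} [Group P] (hP : IsPGroup p P) (φ : P →* MulAut G) :
    ∃ w ∈ Subgroup.center G, orderOf w = p ∧ ∀ σ, φ σ w = w := by
  have : (MulAut.conj : G →* MulAut G).range.Normal :=
    ⟨fun _ ⟨g, hg⟩ f => ⟨f g, by ext x; simp [← hg]⟩⟩
  -- the elements fixed by every inner automorphism are the central ones
  set K := (MulAut.conj : G →* MulAut G).range ⊔ φ.range
  have hK : IsPGroup p K :=
    (hG.of_surjective _ MulAut.conj.rangeRestrict_surjective).to_sup_of_normal_left
      (hP.of_surjective _ φ.rangeRestrict_surjective)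
  have hF : p ∣ Nat.card (FixedPoints.subgroup K G) :=
    Nat.modEq_zero_iff_dvd.mp ((hK.card_modEq_card_fixedPoints G).symm.trans
      ((hG.card_eq_or_dvd.resolve_left Finite.one_lt_card.ne').modEq_zero_nat))
  obtain ⟨w, hw⟩ := exists_prime_orderOf_dvd_card' p hF
  have hfix : ∀ f ∈ K, f w = w := fun f hf => w.2 ⟨f, hf⟩
  refine ⟨w, Subgroup.mem_center_iff.mpr fun g => ?_, by rw [Subgroup.orderOf_coe, hw],
    fun σ => hfix _ (Subgroup.mem_sup_right ⟨σ, rfl⟩)⟩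
  have := hfix (MulAut.conj g) (Subgroup.mem_sup_left ⟨g, rfl⟩)
  rw [MulAut.conj_apply, mul_inv_eq_iff_eq_mul] at this
  exact this

theorem IsCyclic.mem_of_orderOf_dvd_card {C : Type*} [Group C] [Finite C] [IsCyclic C]
    (H : Subgroup C) {x : C} (hx : orderOf x ∣ Nat.card H) : x ∈ H := by
  classical
  have := Fintype.ofFinite C
  by_contra hxH
  have hsub : insert x (H : Set C).toFinset ⊆ ({a | a ^ Nat.card H = 1} : Finset C) := by
    intro a ha
    rw [Finset.mem_insert, Set.mem_toFinset] at ha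
    rw [Finset.mem_filter_univ, ← orderOf_dvd_iff_pow_eq_one]
    rcases ha with rfl | ha
    · exact hx
    · exact H.orderOf_dvd_natCard ha
  have hcard := (Finset.card_le_card hsub).trans (IsCyclic.card_pow_eq_one_le Nat.card_pos)
  rw [Finset.card_insert_of_notMem (by simpa using hxH), Set.toFinset_card,
    ← Nat.card_eq_fintype_card] at hcard
  exact hcard.not_gt (Nat.lt_succ_self _)

theorem eq_one_or_eq_of_mem_zpowers_of_orderOf_eq_two {G : Type*} [Group G] {w a : G}
    (hw : orderOf w = 2) (ha : a ∈ Subgroup.zpowers w) : a = 1 ∨ a = w := by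
  obtain ⟨k, rfl⟩ := Subgroup.mem_zpowers_iff.mp ha
  rw [← zpow_mod_orderOf, hw]
  rcases Int.emod_two_eq_zero_or_one k with h | h <;> simp [h]

def IsSubgroupOf.toSubgroup {G : Type*} {S : Group G} {H : Set G} (hH : IsSubgroupOf S H) :
    Subgroup G where
  carrier := H
  one_mem' := hH.1
  mul_mem' ha hb := hH.2.1 _ ha _ hb
  inv_mem' ha := hH.2.2 _ ha

theorem IsSubgroupOf.image {G Q : Type*} (S : Group G) (T : Group Q) (f : G → Q)
    (hf : ∀ a b, f (S.mul a b) = T.mul (f a) (f b)) {H : Set G} (hH : IsSubgroupOf S H) :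
    IsSubgroupOf T (f '' H) := by
  let φ : G →* Q := MonoidHom.mk' f hf
  obtain ⟨hone, hmul, hinv⟩ := hH
  refine ⟨⟨S.one, hone, map_one φ⟩, ?_, ?_⟩
  · rintro _ ⟨a, ha, rfl⟩ _ ⟨b, hb, rfl⟩
    exact ⟨S.mul a b, hmul a ha b hb, hf a b⟩
  · rintro _ ⟨a, ha, rfl⟩
    exact ⟨S.inv a, hinv a ha, map_inv φ a⟩

theorem IsSubgroupOf.mem_of_mul_self_eq_one {G : Type*} [Finite G] {S : Group G}
    (hcyc : letI := S; IsCyclic G) {n : ℕ} (hcard : Nat.card G = 2 ^ n) {H : Set G}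
    (hH : IsSubgroupOf S H) (hH1 : H ≠ {S.one}) {w : G} (hw : S.mul w w = S.one)
    (hw1 : w ≠ S.one) : w ∈ H := by
  have hbot : hH.toSubgroup ≠ ⊥ := fun h => hH1 <| Set.eq_singleton_iff_unique_mem.mpr
    ⟨hH.1, fun x hx => (Subgroup.eq_bot_iff_forall _).mp h x hx⟩
  refine IsCyclic.mem_of_orderOf_dvd_card hH.toSubgroup ?_
  rw [orderOf_eq_prime (by rw [pow_two]; exact hw) hw1]
  exact ((IsPGroup.of_card hcard).to_subgroup _).card_eq_or_dvd.resolve_left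
    (Subgroup.card_eq_one.not.mpr hbot)

/- From here on `(G,·)` is the instance `dot` and `(G,∘)` the explicit structure `circ`; `dot` is
bound last, so `*`, `⁻¹` and `1` always refer to `(G,·)`. -/

section Gamma

variable {G : Type*} {circ : Group G} [dot : Group G]

theorem gammaFun_eq (σ τ : G) : gammaFun dot circ σ τ = σ⁻¹ * circ.mul σ τ := rfl

theorem circ_mul_eq_mul_gammaFun (σ τ : G) : circ.mul σ τ = σ * gammaFun dot circ σ τ :=
  (mul_inv_cancel_left σ _).symm

end Gamma

namespace IsSkewBrace

variable {G : Type*} {circ : Group G} [dot : Group G] (hsb : IsSkewBrace dot circ)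
include hsb

theorem circ_mul_mul (σ τ κ : G) :
    circ.mul σ (τ * κ) = circ.mul σ τ * σ⁻¹ * circ.mul σ κ :=
  hsb σ τ κ

theorem circ_one : circ.one = 1 := by
  have h := hsb.circ_mul_mul circ.one 1 1
  have hone : ∀ x, circ.mul circ.one x = x := circ.one_mul
  rw [hone, hone, mul_one, mul_one, one_mul, eq_comm, inv_eq_one] at h
  exact h

theorem gammaFun_mul (σ τ κ : G) :
    gammaFun dot circ σ (τ * κ) = gammaFun dot circ σ τ * gammaFun dot circ σ κ := by
  simp only [gammaFun_eq, hsb.circ_mul_mul, mul_assoc]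

theorem gammaFun_circ_one (τ : G) : gammaFun dot circ circ.one τ = τ := by
  have hone : circ.mul circ.one τ = τ := circ.one_mul τ
  rw [gammaFun_eq, hone, hsb.circ_one, inv_one, one_mul]

theorem gammaFun_circ_mul (σ τ κ : G) :
    gammaFun dot circ (circ.mul σ τ) κ = gammaFun dot circ σ (gammaFun dot circ τ κ) := by
  have h : circ.mul (circ.mul σ τ) κ = circ.mul σ τ * gammaFun dot circ σ (gammaFun dot circ τ κ) :=
    calc circ.mul (circ.mul σ τ) κ
        = circ.mul σ (τ * gammaFun dot circ τ κ) := by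
          rw [← circ_mul_eq_mul_gammaFun]; exact circ.mul_assoc σ τ κ
      _ = σ * gammaFun dot circ σ τ * gammaFun dot circ σ (gammaFun dot circ τ κ) := by
          rw [circ_mul_eq_mul_gammaFun (circ := circ) σ, hsb.gammaFun_mul, mul_assoc]
      _ = circ.mul σ τ * gammaFun dot circ σ (gammaFun dot circ τ κ) := by
          rw [← circ_mul_eq_mul_gammaFun]
  rw [gammaFun_eq, h, inv_mul_cancel_left]

theorem gammaFun_circ_inv_gammaFun (σ τ : G) :
    gammaFun dot circ (circ.inv σ) (gammaFun dot circ σ τ) = τ := by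
  have h : circ.mul (circ.inv σ) σ = circ.one := circ.inv_mul_cancel σ
  rw [← hsb.gammaFun_circ_mul, h, hsb.gammaFun_circ_one]

theorem gammaFun_gammaFun_circ_inv (σ τ : G) :
    gammaFun dot circ σ (gammaFun dot circ (circ.inv σ) τ) = τ := by
  have h : circ.mul σ (circ.inv σ) = circ.one := @mul_inv_cancel G circ σ
  rw [← hsb.gammaFun_circ_mul, h, hsb.gammaFun_circ_one]

def gammaAut (σ : G) : MulAut G where
  toFun := gammaFun dot circ σ
  invFun := gammaFun dot circ (circ.inv σ)
  left_inv := hsb.gammaFun_circ_inv_gammaFun σ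
  right_inv := hsb.gammaFun_gammaFun_circ_inv σ
  map_mul' := hsb.gammaFun_mul σ

theorem gammaAut_apply (σ τ : G) : hsb.gammaAut σ τ = gammaFun dot circ σ τ := rfl

def gammaHom : @MonoidHom G (MulAut G) circ.toMulOneClass.toMulOne _ :=
  @MonoidHom.mk' G (MulAut G) _ circ.toMulOneClass hsb.gammaAut
    fun σ τ => MulEquiv.ext (hsb.gammaFun_circ_mul σ τ)

theorem exists_mem_center_orderOf_eq_gammaFun_eq {p n : ℕ} [Fact p.Prime] [Finite G]
    (hcard : Nat.card G = p ^ n) (hn : n ≠ 0) :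
    ∃ w ∈ Subgroup.center G, orderOf w = p ∧ ∀ σ, gammaFun dot circ σ w = w := by
  have : Nontrivial G :=
    (IsPGroup.of_card hcard).nontrivial_iff_card.mpr ⟨n, Nat.pos_of_ne_zero hn, hcard⟩
  have hP : @IsPGroup p G circ := by
    let _ := circ
    exact IsPGroup.of_card hcard
  exact @IsPGroup.exists_mem_center_orderOf_eq_forall_apply_eq p _ G _ _ _
    (IsPGroup.of_card hcard) G circ hP hsb.gammaHom

theorem circ_mul_eq_mul_of_mem_zpowers {w : G} (hw : ∀ σ, gammaFun dot circ σ w = w) (x : G)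
    {a : G} (ha : a ∈ Subgroup.zpowers w) : circ.mul x a = x * a := by
  obtain ⟨k, rfl⟩ := Subgroup.mem_zpowers_iff.mp ha
  rw [circ_mul_eq_mul_gammaFun (circ := circ), ← hsb.gammaAut_apply, map_zpow, hsb.gammaAut_apply,
    hw]

theorem isLeftIdeal_singleton_one : IsLeftIdeal dot circ {1} := by
  refine ⟨⟨rfl, ?_, ?_⟩, ?_⟩
  · rintro a rfl b rfl
    exact mul_one (1 : G)
  · rintro a rfl
    exact inv_one
  · rintro σ τ rfl
    exact map_one (hsb.gammaAut σ)

end IsSkewBrace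

section Transfer

variable {G Q : Type*} {circ : Group G} [dot : Group G] {circQ : Group Q} [dotQ : Group Q]
  (f : G →* Q) (hf : ∀ a b, f (circ.mul a b) = circQ.mul (f a) (f b))
include hf

theorem map_gammaFun (σ τ : G) :
    f (gammaFun dot circ σ τ) = gammaFun dotQ circQ (f σ) (f τ) := by
  rw [gammaFun_eq, gammaFun_eq, map_mul, map_inv, hf]

theorem IsSkewBrace.of_surjective (hsb : IsSkewBrace dot circ) (hsurj : Function.Surjective f) :
    IsSkewBrace dotQ circQ := by
  intro σ τ κ
  obtain ⟨σ, rfl⟩ := hsurj σ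
  obtain ⟨τ, rfl⟩ := hsurj τ
  obtain ⟨κ, rfl⟩ := hsurj κ
  show circQ.mul (f σ) (f τ * f κ) = circQ.mul (f σ) (f τ) * (f σ)⁻¹ * circQ.mul (f σ) (f κ)
  rw [← map_mul, ← hf, ← hf, ← hf, ← map_inv, ← map_mul, ← map_mul, hsb.circ_mul_mul]

theorem IsLeftIdeal.preimage {L : Set Q} (hL : IsLeftIdeal dotQ circQ L) :
    IsLeftIdeal dot circ (f ⁻¹' L) := by
  obtain ⟨⟨hone, hmul, hinv⟩, hgamma⟩ := hL
  refine ⟨⟨?_, fun a ha b hb => ?_, fun a ha => ?_⟩, fun σ τ hτ => ?_⟩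
  · show f 1 ∈ L
    rw [map_one]
    exact hone
  · show f (a * b) ∈ L
    rw [map_mul]
    exact hmul _ ha _ hb
  · show f a⁻¹ ∈ L
    rw [map_inv]
    exact hinv _ ha
  · show f (gammaFun dot circ σ τ) ∈ L
    rw [map_gammaFun f hf]
    exact hgamma _ _ hτ

end Transfer

section Quotient

variable {G : Type*} (circ : Group G) [dot : Group G] (N : Subgroup G)
  (hN : ∀ x, ∀ a ∈ N, circ.mul x a = x * a) (hcomm : ∀ a b, circ.mul a b = circ.mul b a)

/-- As `x * a = x ∘ a` for `a ∈ N`, the left cosets of `N` in `(G,·)` are also its cosets in the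
commutative group `(G,∘)`, so the coset relation is a congruence for `∘` as well. -/
def quotientCircCon : @Con G circ.toMul :=
  @Con.mk G circ.toMul (QuotientGroup.leftRel N) fun {x x' y y'} hx hy => by
    rw [QuotientGroup.leftRel_apply] at hx hy ⊢
    have hx' : x' = circ.mul x (x⁻¹ * x') := by rw [hN x _ hx, mul_inv_cancel_left]
    have hy' : y' = circ.mul y (y⁻¹ * y') := by rw [hN y _ hy, mul_inv_cancel_left]
    have hswap : ∀ a b c d : G, circ.mul (circ.mul a b) (circ.mul c d) =
        circ.mul (circ.mul a c) (circ.mul b d) := by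
      let _ : CommGroup G := { circ with mul_comm := hcomm }
      exact mul_mul_mul_comm
    show (circ.mul x y)⁻¹ * circ.mul x' y' ∈ N
    rw [hx', hy', hswap, hN _ _ hy, hN _ _ (N.mul_mem hx hy), inv_mul_cancel_left]
    exact N.mul_mem hx hy

abbrev quotientCirc : Group (G ⧸ N) := @Con.group G circ (quotientCircCon circ N hN hcomm)

theorem isSkewBrace_quotientCirc [N.Normal] (hsb : IsSkewBrace dot circ) :
    IsSkewBrace (QuotientGroup.Quotient.group N) (quotientCirc circ N hN hcomm) :=
  hsb.of_surjective (QuotientGroup.mk' N) (fun _ _ => rfl) (QuotientGroup.mk'_surjective N)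

theorem isCyclic_quotientCirc (hcyc : letI := circ; IsCyclic G) :
    letI := quotientCirc circ N hN hcomm; IsCyclic (G ⧸ N) := by
  let _ := quotientCirc circ N hN hcomm
  let c := quotientCircCon circ N hN hcomm
  let _ := circ
  exact isCyclic_of_surjective c.mk' Con.mk'_surjective

theorem IsSubgroupOf.isLeftIdeal_of_isLeftIdeal_image [N.Normal] {H : Set G}
    (hH : IsSubgroupOf circ H) (hNH : (N : Set G) ⊆ H)
    (hQ : IsLeftIdeal (QuotientGroup.Quotient.group N) (quotientCirc circ N hN hcomm)
      (QuotientGroup.mk '' H)) :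
    IsLeftIdeal dot circ H := by
  have hHN : (QuotientGroup.mk : G → G ⧸ N) ⁻¹' (QuotientGroup.mk '' H) = H := by
    refine subset_antisymm ?_ (Set.subset_preimage_image _ _)
    rintro x ⟨h, hh, hx⟩
    have ha : h⁻¹ * x ∈ N := QuotientGroup.eq.mp hx
    rw [← mul_inv_cancel_left h x, ← hN h _ ha]
    exact hH.2.1 h hh _ (hNH ha)
  rw [← hHN]
  exact hQ.preimage (circQ := quotientCirc circ N hN hcomm) (QuotientGroup.mk' N) fun _ _ => rfl

end Quotient

theorem IsSkewBrace.isLeftIdeal_of_isCyclic_of_card_eq_two_pow {G : Type*} [Finite G]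
    {circ : Group G} [dot : Group G] (hsb : IsSkewBrace dot circ)
    (hcyc : letI := circ; IsCyclic G) {n : ℕ} (hcard : Nat.card G = 2 ^ n) {H : Set G}
    (hH : IsSubgroupOf circ H) : IsLeftIdeal dot circ H := by
  induction n generalizing G with
  | zero =>
    have : Subsingleton G := (Nat.card_eq_one_iff_unique.mp hcard).1
    have hH1 : H = {1} :=
      Set.eq_singleton_iff_unique_mem.mpr ⟨hsb.circ_one ▸ hH.1, fun _ _ => Subsingleton.elim _ _⟩
    rw [hH1]
    exact hsb.isLeftIdeal_singleton_one
  | succ n ih =>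
    by_cases hH1 : H = {1}
    · rw [hH1]
      exact hsb.isLeftIdeal_singleton_one
    obtain ⟨w, hwc, hw2, hwfix⟩ :=
      hsb.exists_mem_center_orderOf_eq_gammaFun_eq (p := 2) hcard n.succ_ne_zero
    set N := Subgroup.zpowers w
    have hN : ∀ x, ∀ a ∈ N, circ.mul x a = x * a := fun x _ =>
      hsb.circ_mul_eq_mul_of_mem_zpowers hwfix x
    have hcomm : ∀ a b, circ.mul a b = circ.mul b a := by
      let _ := circ
      exact IsCyclic.commGroup.mul_comm
    have hwH : w ∈ H := hH.mem_of_mul_self_eq_one hcyc hcard (by rwa [hsb.circ_one])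
      (by rw [hN w w (Subgroup.mem_zpowers w), hsb.circ_one, ← pow_two, ← hw2, pow_orderOf_eq_one])
      (by rw [hsb.circ_one]; rintro rfl; simp at hw2)
    have hNH : (N : Set G) ⊆ H := fun a ha =>
      (eq_one_or_eq_of_mem_zpowers_of_orderOf_eq_two hw2 ha).elim
        (fun h => h ▸ hsb.circ_one ▸ hH.1) (fun h => h ▸ hwH)
    have : N.Normal := ⟨fun a ha g => by
      rwa [Subgroup.mem_center_iff.mp (Subgroup.zpowers_le.mpr hwc ha) g, mul_inv_cancel_right]⟩
    have hcardQ : Nat.card (G ⧸ N) = 2 ^ n := by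
      have := Subgroup.card_eq_card_quotient_mul_card_subgroup N
      rw [hcard, Nat.card_zpowers, hw2, pow_succ] at this
      exact Nat.eq_of_mul_eq_mul_right two_pos this.symm
    exact hH.isLeftIdeal_of_isLeftIdeal_image circ N hN hcomm hNH <|
      ih (dot := QuotientGroup.Quotient.group N) (isSkewBrace_quotientCirc circ N hN hcomm hsb)
        (isCyclic_quotientCirc circ N hN hcomm hcyc) hcardQ
        (hH.image circ (quotientCirc circ N hN hcomm) QuotientGroup.mk fun _ _ => rfl)

theorem stmt19_general {G : Type*} [Finite G] (circ : Group G) (m : ℕ)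
    (hcard : Nat.card G = 2 ^ m)
    (hcyc : ∃ g : G, ∀ x : G, ∃ k : ℤ, x = circ.zpow k g) :
    ∀ dot : Group G, IsSkewBrace dot circ →
      ∀ H : Set G, IsSubgroupOf circ H → IsLeftIdeal dot circ H := by
  intro dot hsb H hH
  have hcyc' : letI := circ; IsCyclic G := by
    obtain ⟨g, hg⟩ := hcyc
    let _ := circ
    exact ⟨g, fun x => (hg x).imp fun _ hk => hk.symm⟩
  exact hsb.isLeftIdeal_of_isCyclic_of_card_eq_two_pow hcyc' hcard hH

/-- If `(G,∘)` is cyclic of order `2^m`, `m ≥ 1`, then for every skew brace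
`(G,·,∘)`, every subgroup of `(G,∘)` is a left ideal of `(G,·,∘)`. -/
theorem stmt19 {G : Type*} [Finite G] (circ : Group G) (m : ℕ)
    (hm : 1 ≤ m) (hcard : Nat.card G = 2 ^ m)
    (hcyc : ∃ g : G, ∀ x : G, ∃ k : ℤ, x = circ.zpow k g) :
    ∀ dot : Group G, IsSkewBrace dot circ →
      ∀ H : Set G, IsSubgroupOf circ H → IsLeftIdeal dot circ H :=
  stmt19_general circ m hcard hcyc
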